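/- Let N ≥ 3 be an integer, 0 < α < N−1, and f_α(x) = (N−1) g_α(|x|)/|x| on B₁(0)∖{0} ⊂ ℝ^N. Then for every t > 0 one has t · (Lebesgue measure of {x ∈ B₁(0) : x ≠ 0 and |f_α(x)| > t})^{1/N} ≤ (N−1) ω_N^{1/N}, where ω_N is the Lebesgue volume of the unit ball of ℝ^N. -/

import Mathlib

open MeasureTheory

/-- The profile `g_α` of the datum of the extremal example. -/
noncomputable def gAlpha (N : ℕ) (α r : ℝ) : ℝ :=
  α * r ^ (-α - 1) * (α ^ 2 * r ^ (-2 * α - 2) - (α + 2 - N) / ((N : ℝ) - 1)) /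
    (1 + α ^ 2 * r ^ (-2 * α - 2)) ^ ((3 : ℝ) / 2)

/-- The datum `f_α(x) = (N−1) g_α(|x|)/|x|` of the extremal example. -/
noncomputable def fAlpha (N : ℕ) (α : ℝ) (x : EuclideanSpace ℝ (Fin N)) : ℝ :=
  ((N : ℝ) - 1) * gAlpha N α ‖x‖ / ‖x‖

/-!
Writing `s = α r^{-α-1}`, one has `g_α(r) = s (s² - c) / (1 + s²)^{3/2}` with
`c = (α+2-N)/(N-1) ∈ [-1, 1]`, and `|s| |s² - c| ≤ |s| (1 + s²) ≤ (1 + s²)^{3/2}`, so `|g_α| ≤ 1`.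
Hence `|f_α(x)| ≤ (N-1)/|x|`, the superlevel set `{|f_α| > t}` lies in the ball of radius
`(N-1)/t`, and scaling of Lebesgue measure bounds its volume by `((N-1)/t)^N ω_N`.
-/

open Metric Module

lemma abs_mul_sq_sub_le_one_add_sq_rpow {s c : ℝ} (hc : |c| ≤ 1) :
    |s * (s ^ 2 - c)| ≤ (1 + s ^ 2) ^ ((3 : ℝ) / 2) := by
  have hsqrt : |s| ≤ √(1 + s ^ 2) := Real.abs_le_sqrt (by linarith)
  have hsub : |s ^ 2 - c| ≤ 1 + s ^ 2 := by
    rw [abs_le] at hc ⊢; constructor <;> nlinarith [sq_nonneg s]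
  calc |s * (s ^ 2 - c)| = |s| * |s ^ 2 - c| := abs_mul _ _
    _ ≤ √(1 + s ^ 2) * (1 + s ^ 2) := by gcongr
    _ = (1 + s ^ 2) ^ ((3 : ℝ) / 2) := by
      rw [Real.sqrt_eq_rpow, show (3 : ℝ) / 2 = 1 / 2 + 1 by norm_num,
        Real.rpow_add (by positivity), Real.rpow_one]

lemma gAlpha_eq_of_nonneg {N : ℕ} {α r : ℝ} (hr : 0 ≤ r) :
    gAlpha N α r = α * r ^ (-α - 1) * ((α * r ^ (-α - 1)) ^ 2 - (α + 2 - N) / ((N : ℝ) - 1)) /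
      (1 + (α * r ^ (-α - 1)) ^ 2) ^ ((3 : ℝ) / 2) := by
  have hsq : (α * r ^ (-α - 1)) ^ 2 = α ^ 2 * r ^ (-2 * α - 2) := by
    rw [mul_pow, ← Real.rpow_mul_natCast hr]
    ring_nf
  rw [gAlpha, hsq]

lemma abs_gAlpha_le_one {N : ℕ} {α r : ℝ} (hN : 1 < (N : ℝ)) (hα : -1 ≤ α)
    (hαN : α ≤ 2 * N - 3) (hr : 0 ≤ r) : |gAlpha N α r| ≤ 1 := by
  have hc : |(α + 2 - N) / ((N : ℝ) - 1)| ≤ 1 := by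
    rw [abs_div, abs_of_pos (by linarith : (0 : ℝ) < N - 1), div_le_one (by linarith), abs_le]
    constructor <;> linarith
  have hden : 0 < (1 + (α * r ^ (-α - 1)) ^ 2) ^ ((3 : ℝ) / 2) := by positivity
  rw [gAlpha_eq_of_nonneg hr, abs_div, abs_of_pos hden, div_le_one hden]
  exact abs_mul_sq_sub_le_one_add_sq_rpow hc

lemma abs_fAlpha_le {N : ℕ} {α : ℝ} (hN : 1 < (N : ℝ)) (hα : -1 ≤ α)
    (hαN : α ≤ 2 * N - 3) (x : EuclideanSpace ℝ (Fin N)) :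
    |fAlpha N α x| ≤ ((N : ℝ) - 1) / ‖x‖ := by
  rw [fAlpha, abs_div, abs_mul, abs_norm, abs_of_pos (by linarith : (0 : ℝ) < N - 1)]
  gcongr
  exact mul_le_of_le_one_right (by linarith) (abs_gAlpha_le_one hN hα hαN (norm_nonneg x))

lemma toReal_measure_rpow_le_of_subset_ball {E : Type*} [NormedAddCommGroup E]
    [NormedSpace ℝ E] [FiniteDimensional ℝ E] [Nontrivial E] [MeasurableSpace E] [BorelSpace E]
    (μ : Measure E) [μ.IsAddHaarMeasure] {s : Set E} {x : E} {R : ℝ} (hR : 0 ≤ R)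
    (hs : s ⊆ ball x R) :
    (μ s).toReal ^ ((1 : ℝ) / finrank ℝ E) ≤
      R * (μ (ball (0 : E) 1)).toReal ^ ((1 : ℝ) / finrank ℝ E) := by
  have hd : finrank ℝ E ≠ 0 := finrank_pos.ne'
  have hvol : (μ s).toReal ≤ R ^ finrank ℝ E * (μ (ball (0 : E) 1)).toReal := by
    calc (μ s).toReal ≤ (μ (ball x R)).toReal := measureReal_mono hs measure_ball_lt_top.ne
      _ = R ^ finrank ℝ E * (μ (ball (0 : E) 1)).toReal := by
        rw [Measure.addHaar_ball μ x hR, ENNReal.toReal_mul, ENNReal.toReal_ofReal (by positivity)]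
  calc (μ s).toReal ^ ((1 : ℝ) / finrank ℝ E)
      ≤ (R ^ finrank ℝ E * (μ (ball (0 : E) 1)).toReal) ^ ((1 : ℝ) / finrank ℝ E) := by
        gcongr
    _ = R * (μ (ball (0 : E) 1)).toReal ^ ((1 : ℝ) / finrank ℝ E) := by
        rw [Real.mul_rpow (by positivity) ENNReal.toReal_nonneg, one_div,
          Real.pow_rpow_inv_natCast hR hd]

theorem fAlpha_weak_LN_upper_bound_general (N : ℕ) (α : ℝ) (hα : 0 < α)
    (hαN : α < (N : ℝ) - 1) (t : ℝ) (ht : 0 < t) :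
    t * (volume {x : EuclideanSpace ℝ (Fin N) |
        x ∈ Metric.ball (0 : EuclideanSpace ℝ (Fin N)) 1 ∧ x ≠ 0 ∧
          t < |fAlpha N α x|}).toReal ^ ((1 : ℝ) / N) ≤
      ((N : ℝ) - 1) *
        (volume (Metric.ball (0 : EuclideanSpace ℝ (Fin N)) 1)).toReal ^ ((1 : ℝ) / N) := by
  have hN : 1 < N := by exact_mod_cast (show (1 : ℝ) < N by linarith)
  have hN2 : (2 : ℝ) ≤ N := by exact_mod_cast hN
  have : Nontrivial (EuclideanSpace ℝ (Fin N)) := by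
    have : Nonempty (Fin N) := ⟨⟨0, by omega⟩⟩
    infer_instance
  have hsub : {x : EuclideanSpace ℝ (Fin N) | x ∈ ball 0 1 ∧ x ≠ 0 ∧ t < |fAlpha N α x|} ⊆
      ball 0 (((N : ℝ) - 1) / t) := by
    rintro x ⟨-, hx0, hxt⟩
    have hx : 0 < ‖x‖ := norm_pos_iff.mpr hx0
    have := hxt.trans_le (abs_fAlpha_le (by linarith) (by linarith) (by linarith) x)
    rw [mem_ball_zero_iff, lt_div_iff₀ ht, mul_comm]
    rwa [lt_div_iff₀ hx] at this
  have hvol := toReal_measure_rpow_le_of_subset_ball volume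
    (div_nonneg (by linarith) ht.le) hsub
  rw [finrank_euclideanSpace_fin] at hvol
  calc t * _ ≤ t * ((((N : ℝ) - 1) / t) * _) := by gcongr
    _ = _ := by field_simp

/-- For `N ≥ 3`, `0 < α < N−1` and every `t > 0`,
`t·|{x ∈ B₁(0), x ≠ 0 : |f_α(x)| > t}|^{1/N} ≤ (N−1) ω_N^{1/N}`. -/
theorem fAlpha_weak_LN_upper_bound (N : ℕ) (hN : 3 ≤ N) (α : ℝ) (hα : 0 < α)
    (hαN : α < (N : ℝ) - 1) (t : ℝ) (ht : 0 < t) :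
    t * (volume {x : EuclideanSpace ℝ (Fin N) |
        x ∈ Metric.ball (0 : EuclideanSpace ℝ (Fin N)) 1 ∧ x ≠ 0 ∧
          t < |fAlpha N α x|}).toReal ^ ((1 : ℝ) / N) ≤
      ((N : ℝ) - 1) *
        (volume (Metric.ball (0 : EuclideanSpace ℝ (Fin N)) 1)).toReal ^ ((1 : ℝ) / N) :=
  fAlpha_weak_LN_upper_bound_general N α hα hαN t ht
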